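/- For the parameter configuration r_1 = (1,0), r_2 = (cos(π/3), sin(π/3)), r_3 = (cos(π/3), −sin(π/3)) in ℝ², the C-cost C(A) = (1/8)·Tr((AᵀA)⁻¹(1_2·1_2ᵀ + 2I)) equals 1, and AᵀA = (3/8)·(1_2·1_2ᵀ + 2I). -/
import Mathlib


open Matrix Real

/-- `h : ℝ² → ℝ³`, `h(w, x) = (w², x², √2 w x)`. -/
noncomputable def h2 (r : Fin 2 → ℝ) : Fin 3 → ℝ :=
  ![r 0 ^ 2, r 1 ^ 2, Real.sqrt 2 * (r 0 * r 1)]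

/-- The optimal (equiangular) Rotosolve parameter configuration. -/
noncomputable def rOpt : Fin 3 → Fin 2 → ℝ :=
  ![![1, 0], ![Real.cos (π / 3), Real.sin (π / 3)], ![Real.cos (π / 3), -Real.sin (π / 3)]]

noncomputable def Mmat : Matrix (Fin 3) (Fin 3) ℝ :=
  ((3 : ℝ) / 8) • (vecMulVec ![1, 1, 0] ![1, 1, 0] + (2 : ℝ) • (1 : Matrix (Fin 3) (Fin 3) ℝ))

noncomputable def Emat : Matrix (Fin 3) (Fin 3) ℝ :=
  !![1, -1/3, 0; -1/3, 1, 0; 0, 0, 4/3]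

lemma key : (Matrix.of fun i => h2 (rOpt i))ᵀ * (Matrix.of fun i => h2 (rOpt i)) = Mmat := by
  ext i j
  fin_cases i <;> fin_cases j <;>
    simp [Mmat, Matrix.mul_apply, h2, rOpt, Fin.sum_univ_three, vecMulVec,
      Real.cos_pi_div_three, Real.sin_pi_div_three, Matrix.one_apply, Matrix.vecHead,
      Matrix.vecTail] <;>
    nlinarith [Real.sq_sqrt (by norm_num : (2:ℝ) ≥ 0), Real.sq_sqrt (by norm_num : (3:ℝ) ≥ 0),
      Real.sqrt_nonneg 2, Real.sqrt_nonneg 3]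

lemma minv : Mmat⁻¹ = Emat := by
  apply Matrix.inv_eq_right_inv
  ext i j
  fin_cases i <;> fin_cases j <;>
    simp [Mmat, Emat, Matrix.mul_apply, Fin.sum_univ_three, vecMulVec, Matrix.one_apply] <;>
    norm_num

/-- For the configuration `r₁ = (1,0)`, `r₂ = (cos(π/3), sin(π/3))`,
`r₃ = (cos(π/3), −sin(π/3))`, the C-cost equals `1` and
`AᵀA = (3/8)(1₂1₂ᵀ + 2I)`. -/
theorem stmt_14 :
    ((1 : ℝ) / 8) *
      (((Matrix.of fun i => h2 (rOpt i))ᵀ * (Matrix.of fun i => h2 (rOpt i)))⁻¹ *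
        (vecMulVec ![1, 1, 0] ![1, 1, 0] + (2 : ℝ) • (1 : Matrix (Fin 3) (Fin 3) ℝ))).trace
      = 1 ∧
    (Matrix.of fun i => h2 (rOpt i))ᵀ * (Matrix.of fun i => h2 (rOpt i)) =
      ((3 : ℝ) / 8) •
        (vecMulVec ![1, 1, 0] ![1, 1, 0] + (2 : ℝ) • (1 : Matrix (Fin 3) (Fin 3) ℝ)) := by
  refine ⟨?_, key⟩
  rw [key, minv]
  simp [Matrix.trace, Matrix.diag, Matrix.mul_apply, Fin.sum_univ_three, Emat, vecMulVec,
    Matrix.one_apply]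
  norm_num
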